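/- Let H ∈ (0,1/2), α > 0 and σ ≠ 0. There exists a constant C > 0, depending only on H, α and σ, such that the following holds. For any measurable functions φ, ψ : ℝ → ℝ with values in [−α⁻¹, −α], and any t ≥ 1, set Φ_t(s) := σ·𝟙_{(−∞,t]}(s)·exp(∫ₛᵗ φ(v)dv) and Ψ(s) := σ·𝟙_{(−∞,0]}(s)·exp(∫ₛ⁰ ψ(v)dv), and let G_t(s) := ∫₀^∞ ξ^{H−3/2}(Φ_t(s) − Φ_t(s+ξ)) dξ and G₀(s) := ∫₀^∞ ξ^{H−3/2}(Ψ(s) − Ψ(s+ξ)) dξ. Then ∫_{−∞}^0 |G_t(s)|·|G₀(s)| ds ≤ C·t^{H−3/2}. -/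

import Mathlib

open MeasureTheory

/-- The kernel `Φ_t(s) = σ·𝟙_{(−∞,t]}(s)·exp(∫ₛᵗ φ(v) dv)`. -/
noncomputable def PhiT (σ : ℝ) (φ : ℝ → ℝ) (t : ℝ) : ℝ → ℝ :=
  Set.indicator (Set.Iic t) (fun s => σ * Real.exp (∫ v in s..t, φ v))

/-- The Marchaud-type fractional derivative `s ↦ ∫₀^∞ ξ^{H−3/2}(f(s) − f(s+ξ)) dξ`. -/
noncomputable def marchaud (H : ℝ) (f : ℝ → ℝ) (s : ℝ) : ℝ :=
  ∫ ξ in Set.Ioi (0:ℝ), ξ ^ (H - 3/2) * (f s - f (s + ξ))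

/-!
Put `u = t - s`. For `ξ ≤ u` write `Φ_t(s) - Φ_t(s+ξ) = σ e^B (e^I - 1)` with
`B = ∫_{s+ξ}^t φ ≤ -α(u-ξ)` and `I = ∫_s^{s+ξ} φ ∈ [-ξ/α, 0]`, so the increment is at most
`|σ| e^{-α(u-ξ)} min(1, ξ/α)`; for `ξ > u` it is `Φ_t(s)`, of size at most `|σ| e^{-αu}`.
Integrated against `ξ^{H-3/2}`, this gives `|G_t(s)| ≲ u^{H-1/2}` when `u ≤ 1` (using
`min ≤ ξ/α`), and `|G_t(s)| ≲ u^{H-3/2}` for every `u` (split at `ξ = u/2`: below it the factor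
`e^{-αu/2}` absorbs every power of `u`, above it `ξ^{H-3/2} ≤ (u/2)^{H-3/2}` and
`∫ e^{-α(u-ξ)} dξ ≤ 1/α`). Hence `|G_t(s)| ≲ t^{H-3/2}` uniformly in `s ≤ 0`, while `|G₀(s)|` is
dominated by `(-s)^{H-1/2}` on `[-1, 0)` and by `(-s)^{H-3/2}` on `(-∞, -1]`, which is integrable.
-/

open Set Real

lemma rpow_add_mul_exp_neg_mul_le {c u : ℝ} (hc : 0 < c) (hu : 0 < u) (p : ℝ) (n : ℕ) :
    u ^ (p + n) * exp (-(c * u)) ≤ n.factorial / c ^ n * u ^ p := by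
  have h := pow_div_factorial_le_exp (c * u) (mul_nonneg hc.le hu.le) n
  rw [div_le_iff₀ (by positivity), mul_pow] at h
  rw [rpow_add hu, rpow_natCast, exp_neg, div_mul_eq_mul_div, le_div_iff₀ (by positivity)]
  calc u ^ p * u ^ n * (exp (c * u))⁻¹ * c ^ n = u ^ p * (c ^ n * u ^ n) * (exp (c * u))⁻¹ := by
        ring
    _ ≤ u ^ p * (exp (c * u) * n.factorial) * (exp (c * u))⁻¹ := by gcongr
    _ = n.factorial * u ^ p := by field_simp

lemma integral_exp_neg_mul_sub_le {c : ℝ} (hc : 0 < c) (u : ℝ) :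
    ∫ ξ in (0:ℝ)..u, exp (-(c * (u - ξ))) ≤ 1 / c := by
  have hF (ξ : ℝ) : HasDerivAt (fun ξ => exp (-(c * (u - ξ))) / c) (exp (-(c * (u - ξ)))) ξ := by
    have h : HasDerivAt (fun ξ => -(c * (u - ξ))) c ξ := by
      simpa using (((hasDerivAt_id' ξ).const_sub u).const_mul c).fun_neg
    simpa [hc.ne'] using h.exp.div_const c
  rw [intervalIntegral.integral_eq_sub_of_hasDerivAt (fun ξ _ => hF ξ)
    ((by fun_prop : Continuous fun ξ => exp (-(c * (u - ξ)))).intervalIntegrable _ _)]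
  simp only [sub_self, mul_zero, neg_zero, exp_zero, sub_zero]
  exact sub_le_self _ (by positivity)

section PiecewiseIntegral
variable {g₁ g₂ : ℝ → ℝ} {a b : ℝ}

lemma integrableOn_Ioi_ite (hab : a ≤ b) (hg₁ : IntervalIntegrable g₁ volume a b)
    (hg₂ : IntegrableOn g₂ (Ioi b)) :
    IntegrableOn (fun x => if x ≤ b then g₁ x else g₂ x) (Ioi a) := by
  rw [← Ioc_union_Ioi_eq_Ioi hab]
  refine IntegrableOn.union ?_ ?_
  · exact ((intervalIntegrable_iff_integrableOn_Ioc_of_le hab).1 hg₁).congr_fun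
      (fun x hx => (if_pos hx.2).symm) measurableSet_Ioc
  · exact hg₂.congr_fun (fun x hx => (if_neg (not_le.2 hx)).symm) measurableSet_Ioi

lemma integral_Ioi_ite (hab : a ≤ b) (hg₁ : IntervalIntegrable g₁ volume a b)
    (hg₂ : IntegrableOn g₂ (Ioi b)) :
    ∫ x in Ioi a, (if x ≤ b then g₁ x else g₂ x) = (∫ x in a..b, g₁ x) + ∫ x in Ioi b, g₂ x := by
  have hg := integrableOn_Ioi_ite hab hg₁ hg₂
  rw [← intervalIntegral.integral_interval_add_Ioi (μ := volume) hg
    (hg.mono_set (Ioi_subset_Ioi hab))]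
  congr 1
  · refine intervalIntegral.integral_congr fun x hx => if_pos ?_
    exact (uIcc_of_le hab ▸ hx).2
  · exact setIntegral_congr_fun measurableSet_Ioi fun x hx => if_neg (not_le.2 hx)

lemma abs_integral_Ioi_le_add {f : ℝ → ℝ} (hab : a ≤ b) (hg₁ : IntervalIntegrable g₁ volume a b)
    (hg₂ : IntegrableOn g₂ (Ioi b)) (hf₁ : ∀ x ∈ Ioc a b, |f x| ≤ g₁ x)
    (hf₂ : ∀ x ∈ Ioi b, |f x| ≤ g₂ x) :
    |∫ x in Ioi a, f x| ≤ (∫ x in a..b, g₁ x) + ∫ x in Ioi b, g₂ x := by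
  rw [← integral_Ioi_ite hab hg₁ hg₂, ← Real.norm_eq_abs]
  refine norm_integral_le_of_norm_le (integrableOn_Ioi_ite hab hg₁ hg₂)
    (ae_restrict_of_forall_mem measurableSet_Ioi fun x hx => ?_)
  split_ifs with h
  · exact hf₁ x ⟨hx, h⟩
  · exact hf₂ x (not_le.1 h)

end PiecewiseIntegral

lemma lintegral_Iio_ofReal_comp_neg {g : ℝ → ℝ} (hg : IntegrableOn g (Ioi 0))
    (hg₀ : ∀ x ∈ Ioi 0, 0 ≤ g x) :
    ∫⁻ s in Iio 0, ENNReal.ofReal (g (-s)) = ENNReal.ofReal (∫ x in Ioi 0, g x) := by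
  have hi : IntegrableOn (fun s => g (-s)) (Iio 0) := by
    have hg' : IntegrableOn g (Ioi (-0)) := by rwa [neg_zero]
    exact hg'.comp_neg_Iio
  rw [← ofReal_integral_eq_lintegral_ofReal hi
    (ae_restrict_of_forall_mem measurableSet_Iio fun s (hs : s < 0) => hg₀ (-s) (neg_pos.2 hs)),
    ← integral_Iic_eq_integral_Iio, integral_comp_neg_Iic, neg_zero]

lemma lintegral_Iio_ofReal_ite_rpow {p q K₁ K₂ : ℝ} (hp : -1 < p) (hq : q < -1)
    (hK₁ : 0 ≤ K₁) (hK₂ : 0 ≤ K₂) :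
    ∫⁻ s in Iio 0, ENNReal.ofReal (if -s ≤ 1 then K₁ * (-s) ^ p else K₂ * (-s) ^ q) =
      ENNReal.ofReal (K₁ / (p + 1) + K₂ / (-1 - q)) := by
  have h₁ : IntervalIntegrable (fun u : ℝ => K₁ * u ^ p) volume 0 1 :=
    (intervalIntegral.intervalIntegrable_rpow' hp).const_mul K₁
  have h₂ : IntegrableOn (fun u : ℝ => K₂ * u ^ q) (Ioi 1) :=
    (integrableOn_Ioi_rpow_of_lt hq one_pos).const_mul K₂
  rw [lintegral_Iio_ofReal_comp_neg (g := fun u => if u ≤ 1 then K₁ * u ^ p else K₂ * u ^ q)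
      (integrableOn_Ioi_ite zero_le_one h₁ h₂)
      (fun u (hu : 0 < u) => by split_ifs <;> positivity),
    integral_Ioi_ite zero_le_one h₁ h₂, intervalIntegral.integral_const_mul, integral_const_mul,
    integral_rpow (Or.inl hp), integral_Ioi_rpow_of_lt hq one_pos,
    one_rpow, one_rpow, zero_rpow (by linarith)]
  congr 1
  rw [show -1 - q = -(q + 1) by ring, div_neg]
  ring

lemma setLIntegral_Iic_ofReal_abs_mul_abs_le {F G : ℝ → ℝ} {A p q K₁ K₂ : ℝ} (hp : -1 < p)
    (hq : q < -1) (hA : 0 ≤ A) (hK₁ : 0 ≤ K₁) (hK₂ : 0 ≤ K₂) (hF : ∀ s < 0, |F s| ≤ A)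
    (hG : ∀ s < 0, |G s| ≤ if -s ≤ 1 then K₁ * (-s) ^ p else K₂ * (-s) ^ q) :
    ∫⁻ s in Iic 0, ENNReal.ofReal (|F s| * |G s|) ≤
      ENNReal.ofReal (A * (K₁ / (p + 1) + K₂ / (-1 - q))) := by
  rw [← setLIntegral_congr Iio_ae_eq_Iic, ENNReal.ofReal_mul hA,
    ← lintegral_Iio_ofReal_ite_rpow hp hq hK₁ hK₂, ← lintegral_const_mul' _ _ ENNReal.ofReal_ne_top]
  refine setLIntegral_mono' measurableSet_Iio fun s (hs : s < 0) => ?_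
  rw [← ENNReal.ofReal_mul hA]
  exact ENNReal.ofReal_le_ofReal (mul_le_mul (hF s hs) (hG s hs) (abs_nonneg _) hA)

section BoundedFunction
variable {φ : ℝ → ℝ} {m M : ℝ}

lemma intervalIntegrable_of_mem_Icc (hφm : Measurable φ) (hφ : ∀ v, φ v ∈ Icc m M) (a b : ℝ) :
    IntervalIntegrable φ volume a b :=
  (intervalIntegrable_const (c := max |m| |M|)).mono_fun hφm.aestronglyMeasurable
    (ae_of_all _ fun v => (abs_le_max_abs_abs (hφ v).1 (hφ v).2).trans (le_abs_self _))

lemma intervalIntegral_mem_Icc_of_mem_Icc (hφm : Measurable φ) (hφ : ∀ v, φ v ∈ Icc m M)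
    {a b : ℝ} (hab : a ≤ b) : ∫ v in a..b, φ v ∈ Icc ((b - a) * m) ((b - a) * M) := by
  have hi := intervalIntegrable_of_mem_Icc hφm hφ a b
  constructor
  · simpa using intervalIntegral.integral_mono_on hab intervalIntegrable_const hi
      fun v _ => (hφ v).1
  · simpa using intervalIntegral.integral_mono_on hab hi intervalIntegrable_const
      fun v _ => (hφ v).2

end BoundedFunction

section Kernel
variable {α σ t : ℝ} {φ : ℝ → ℝ}

lemma abs_PhiT_le (hφm : Measurable φ) (hφ : ∀ v, φ v ∈ Icc (-α⁻¹) (-α)) {x : ℝ} (hx : x ≤ t) :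
    |PhiT σ φ t x| ≤ |σ| * exp (-(α * (t - x))) := by
  rw [PhiT, indicator_of_mem (mem_Iic.2 hx), abs_mul, abs_of_pos (exp_pos _)]
  have := (intervalIntegral_mem_Icc_of_mem_Icc hφm hφ hx).2
  gcongr
  linarith

lemma abs_PhiT_sub_PhiT_add_le (hα : 0 ≤ α) (hφm : Measurable φ)
    (hφ : ∀ v, φ v ∈ Icc (-α⁻¹) (-α)) {s ξ : ℝ} (hξ : 0 ≤ ξ) (h : s + ξ ≤ t) :
    |PhiT σ φ t s - PhiT σ φ t (s + ξ)| ≤ |σ| * (exp (-(α * (t - s - ξ))) * min 1 (ξ / α)) := by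
  have hs : s ≤ t := by linarith
  have hφi := intervalIntegrable_of_mem_Icc hφm hφ
  obtain ⟨hI₁, hI₂⟩ := intervalIntegral_mem_Icc_of_mem_Icc hφm hφ (le_add_of_nonneg_right hξ)
  have hB := (intervalIntegral_mem_Icc_of_mem_Icc hφm hφ h).2
  rw [PhiT, indicator_of_mem (mem_Iic.2 hs), indicator_of_mem (mem_Iic.2 h),
    ← intervalIntegral.integral_add_adjacent_intervals (hφi s (s + ξ)) (hφi _ t)]
  set I := ∫ v in s..s + ξ, φ v
  set B := ∫ v in s + ξ..t, φ v
  have hI : I ≤ 0 := by nlinarith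
  have hexpI : 1 - exp I ≤ min 1 (ξ / α) := by
    refine le_min (by linarith [exp_pos I]) ?_
    have : -I ≤ ξ / α := by rw [div_eq_mul_inv]; linarith
    linarith [add_one_le_exp I]
  have hI' : 0 ≤ 1 - exp I := sub_nonneg.2 (exp_le_one_iff.2 hI)
  rw [show σ * exp (I + B) - σ * exp B = -(σ * (exp B * (1 - exp I))) by rw [exp_add]; ring,
    abs_neg, abs_mul, abs_mul, abs_of_pos (exp_pos B), abs_of_nonneg hI']
  gcongr
  linarith

end Kernel

section FarMajorant
variable {H α u ξ : ℝ}

-- The first term dominates `ξ ^ (H - 3/2) * (exp (-(α * (u - ξ))) * min 1 (ξ / α))` for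
-- `ξ ≤ u / 2`, the second for `u / 2 < ξ ≤ u`.
noncomputable def farMajorant (H α u ξ : ℝ) : ℝ :=
  α⁻¹ * exp (-(α / 2 * u)) * ξ ^ (H - 1/2) + (u / 2) ^ (H - 3/2) * exp (-(α * (u - ξ)))

lemma intervalIntegrable_farMajorant (hH : -1/2 < H) :
    IntervalIntegrable (farMajorant H α u) volume 0 u :=
  ((intervalIntegral.intervalIntegrable_rpow' (by linarith)).const_mul _).add
    ((by fun_prop : Continuous fun ξ => exp (-(α * (u - ξ)))).intervalIntegrable _ _ |>.const_mul _)

lemma rpow_mul_exp_mul_min_le_farMajorant (hα : 0 ≤ α) (hH : H ≤ 3/2) (hξ : ξ ∈ Ioc 0 u) :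
    ξ ^ (H - 3/2) * (exp (-(α * (u - ξ))) * min 1 (ξ / α)) ≤ farMajorant H α u ξ := by
  obtain ⟨hξ₀, hξu⟩ := hξ
  have hu : 0 < u := hξ₀.trans_le hξu
  rcases le_or_gt ξ (u / 2) with hξ₂ | hξ₂
  · have hexp : exp (-(α * (u - ξ))) ≤ exp (-(α / 2 * u)) := exp_le_exp.2 (by nlinarith)
    calc ξ ^ (H - 3/2) * (exp (-(α * (u - ξ))) * min 1 (ξ / α))
        ≤ ξ ^ (H - 3/2) * (exp (-(α / 2 * u)) * (ξ / α)) := by gcongr; exact min_le_right _ _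
      _ = α⁻¹ * exp (-(α / 2 * u)) * ξ ^ (H - 1/2) := by
        rw [show H - 1/2 = H - 3/2 + 1 by ring, rpow_add_one hξ₀.ne']; ring
      _ ≤ _ := le_add_of_nonneg_right (by positivity)
  · have hpow : ξ ^ (H - 3/2) ≤ (u / 2) ^ (H - 3/2) :=
      rpow_le_rpow_of_nonpos (by positivity) hξ₂.le (by linarith)
    calc ξ ^ (H - 3/2) * (exp (-(α * (u - ξ))) * min 1 (ξ / α))
        ≤ (u / 2) ^ (H - 3/2) * (exp (-(α * (u - ξ))) * 1) := by gcongr; exact min_le_left _ _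
      _ ≤ _ := by rw [mul_one]; exact le_add_of_nonneg_left (by positivity)

lemma integral_farMajorant_le (hH : -1/2 < H) (hα : 0 < α) (hu : 0 < u) :
    ∫ ξ in (0:ℝ)..u, farMajorant H α u ξ ≤
      (8 / (α ^ 3 * (H + 1/2)) + 2 ^ (3/2 - H) / α) * u ^ (H - 3/2) := by
  have hH' : 0 < H + 1/2 := by linarith
  have hpow : IntervalIntegrable (fun ξ : ℝ => ξ ^ (H - 1/2)) volume 0 u :=
    intervalIntegral.intervalIntegrable_rpow' (by linarith)
  have hexp : IntervalIntegrable (fun ξ => exp (-(α * (u - ξ)))) volume 0 u :=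
    (by fun_prop : Continuous fun ξ => exp (-(α * (u - ξ)))).intervalIntegrable _ _
  unfold farMajorant
  rw [intervalIntegral.integral_add (hpow.const_mul _) (hexp.const_mul _),
    intervalIntegral.integral_const_mul, intervalIntegral.integral_const_mul,
    integral_rpow (Or.inl (by linarith)), zero_rpow (by linarith), sub_zero]
  have hdecay := rpow_add_mul_exp_neg_mul_le (half_pos hα) hu (H - 3/2) 2
  rw [show H - 3/2 + ((2 : ℕ) : ℝ) = H - 1/2 + 1 by push_cast; ring] at hdecay
  have hhalf : (u / 2) ^ (H - 3/2) = 2 ^ (3/2 - H) * u ^ (H - 3/2) := by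
    rw [div_rpow hu.le zero_le_two, show 3/2 - H = -(H - 3/2) by ring, rpow_neg zero_le_two]
    ring
  calc α⁻¹ * exp (-(α / 2 * u)) * (u ^ (H - 1/2 + 1) / (H - 1/2 + 1)) +
        (u / 2) ^ (H - 3/2) * ∫ ξ in (0:ℝ)..u, exp (-(α * (u - ξ)))
      = (α * (H + 1/2))⁻¹ * (u ^ (H - 1/2 + 1) * exp (-(α / 2 * u))) +
        2 ^ (3/2 - H) * u ^ (H - 3/2) * ∫ ξ in (0:ℝ)..u, exp (-(α * (u - ξ))) := by
        rw [hhalf, show H - 1/2 + 1 = H + 1/2 by ring]; field_simp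
    _ ≤ (α * (H + 1/2))⁻¹ * (Nat.factorial 2 / (α / 2) ^ 2 * u ^ (H - 3/2)) +
        2 ^ (3/2 - H) * u ^ (H - 3/2) * (1 / α) := by
        gcongr
        exact integral_exp_neg_mul_sub_le hα u
    _ = _ := by norm_num; field_simp; ring

end FarMajorant

section Marchaud
variable {H α σ s t : ℝ} {φ : ℝ → ℝ}

lemma abs_marchaud_PhiT_le (hH : H < 1/2) (hα : 0 ≤ α) (hφm : Measurable φ)
    (hφ : ∀ v, φ v ∈ Icc (-α⁻¹) (-α)) (hst : s < t) {g : ℝ → ℝ}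
    (hg : IntervalIntegrable g volume 0 (t - s))
    (hg_le : ∀ ξ ∈ Ioc 0 (t - s),
      |σ| * ξ ^ (H - 3/2) * (exp (-(α * (t - s - ξ))) * min 1 (ξ / α)) ≤ g ξ) :
    |marchaud H (PhiT σ φ t) s| ≤
      (∫ ξ in (0:ℝ)..t - s, g ξ) +
        |σ| * exp (-(α * (t - s))) * ((t - s) ^ (H - 1/2) / (1/2 - H)) := by
  have hu : 0 < t - s := sub_pos.2 hst
  have htail : ∫ ξ in Ioi (t - s), |σ| * exp (-(α * (t - s))) * ξ ^ (H - 3/2) =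
      |σ| * exp (-(α * (t - s))) * ((t - s) ^ (H - 1/2) / (1/2 - H)) := by
    rw [integral_const_mul, integral_Ioi_rpow_of_lt (by linarith) hu]
    congr 1
    rw [show H - 3/2 + 1 = H - 1/2 by ring, neg_div, ← div_neg, neg_sub]
  rw [← htail, marchaud]
  refine abs_integral_Ioi_le_add hu.le hg
    ((integrableOn_Ioi_rpow_of_lt (by linarith) hu).const_mul _) (fun ξ hξ => ?_) (fun ξ hξ => ?_)
  · rw [abs_mul, abs_of_nonneg (rpow_nonneg hξ.1.le _)]
    refine le_trans ?_ (hg_le ξ hξ)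
    rw [mul_comm |σ|, mul_assoc]
    exact mul_le_mul_of_nonneg_left
      (abs_PhiT_sub_PhiT_add_le hα hφm hφ hξ.1.le (by linarith [hξ.2])) (rpow_nonneg hξ.1.le _)
  · have hξ₀ : 0 < ξ := hu.trans hξ
    have hout : PhiT σ φ t (s + ξ) = 0 :=
      indicator_of_notMem (by simp only [mem_Iic, not_le]; linarith [mem_Ioi.1 hξ]) _
    rw [abs_mul, abs_of_nonneg (rpow_nonneg hξ₀.le _), hout, sub_zero, mul_comm]
    exact mul_le_mul_of_nonneg_right (abs_PhiT_le hφm hφ hst.le) (rpow_nonneg hξ₀.le _)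

lemma abs_marchaud_PhiT_le_near (hH : H ∈ Ioo (-1/2) (1/2)) (hα : 0 ≤ α) (hφm : Measurable φ)
    (hφ : ∀ v, φ v ∈ Icc (-α⁻¹) (-α)) (hst : s < t) (hts : t - s ≤ 1) :
    |marchaud H (PhiT σ φ t) s| ≤
      |σ| * (1 / (α * (H + 1/2)) + 1 / (1/2 - H)) * (t - s) ^ (H - 1/2) := by
  obtain ⟨hH₀, hH₁⟩ := hH
  have hu : 0 < t - s := sub_pos.2 hst
  refine (abs_marchaud_PhiT_le hH₁ hα hφm hφ hst (g := fun ξ => |σ| / α * ξ ^ (H - 1/2))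
    ((intervalIntegral.intervalIntegrable_rpow' (by linarith)).const_mul _) fun ξ hξ => ?_).trans ?_
  · have hξ₀ : 0 < ξ := hξ.1
    have hexp : exp (-(α * (t - s - ξ))) ≤ 1 :=
      exp_le_one_iff.2 (neg_nonpos.2 (mul_nonneg hα (by linarith [hξ.2])))
    calc |σ| * ξ ^ (H - 3/2) * (exp (-(α * (t - s - ξ))) * min 1 (ξ / α))
        ≤ |σ| * ξ ^ (H - 3/2) * (1 * (ξ / α)) := by gcongr; exact min_le_right _ _
      _ = |σ| / α * ξ ^ (H - 1/2) := by
        rw [show H - 1/2 = H - 3/2 + 1 by ring, rpow_add_one hξ₀.ne']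
        ring
  · rw [intervalIntegral.integral_const_mul, integral_rpow (Or.inl (by linarith)),
      zero_rpow (by linarith), sub_zero, show H - 1/2 + 1 = H + 1/2 by ring]
    have hpow : (t - s) ^ (H + 1/2) ≤ (t - s) ^ (H - 1/2) :=
      rpow_le_rpow_of_exponent_ge hu hts (by linarith)
    have hexp : exp (-(α * (t - s))) ≤ 1 := exp_le_one_iff.2 (by nlinarith)
    have h₁ : 0 < H + 1/2 := by linarith
    have h₂ : 0 < 1/2 - H := by linarith
    calc |σ| / α * ((t - s) ^ (H + 1/2) / (H + 1/2)) +
          |σ| * exp (-(α * (t - s))) * ((t - s) ^ (H - 1/2) / (1/2 - H))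
        ≤ |σ| / α * ((t - s) ^ (H - 1/2) / (H + 1/2)) +
          |σ| * 1 * ((t - s) ^ (H - 1/2) / (1/2 - H)) := by gcongr
      _ = _ := by field_simp

lemma abs_marchaud_PhiT_le_far (hH : H ∈ Ioo (-1/2) (1/2)) (hα : 0 < α) (hφm : Measurable φ)
    (hφ : ∀ v, φ v ∈ Icc (-α⁻¹) (-α)) (hst : s < t) :
    |marchaud H (PhiT σ φ t) s| ≤
      |σ| * (8 / (α ^ 3 * (H + 1/2)) + 2 ^ (3/2 - H) / α + 1 / (α * (1/2 - H))) *
        (t - s) ^ (H - 3/2) := by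
  obtain ⟨hH₀, hH₁⟩ := hH
  have hu : 0 < t - s := sub_pos.2 hst
  refine (abs_marchaud_PhiT_le hH₁ hα.le hφm hφ hst
    (g := fun ξ => |σ| * farMajorant H α (t - s) ξ)
    ((intervalIntegrable_farMajorant hH₀).const_mul _) fun ξ hξ => ?_).trans ?_
  · rw [mul_assoc]
    exact mul_le_mul_of_nonneg_left
      (rpow_mul_exp_mul_min_le_farMajorant hα.le (by linarith) hξ) (abs_nonneg σ)
  · have htail := rpow_add_mul_exp_neg_mul_le hα hu (H - 3/2) 1
    rw [show H - 3/2 + ((1 : ℕ) : ℝ) = H - 1/2 by push_cast; ring] at htail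
    have h₂ : 0 < 1/2 - H := by linarith
    rw [intervalIntegral.integral_const_mul]
    calc |σ| * (∫ ξ in (0:ℝ)..t - s, farMajorant H α (t - s) ξ) +
          |σ| * exp (-(α * (t - s))) * ((t - s) ^ (H - 1/2) / (1/2 - H))
        = |σ| * (∫ ξ in (0:ℝ)..t - s, farMajorant H α (t - s) ξ) +
          |σ| / (1/2 - H) * ((t - s) ^ (H - 1/2) * exp (-(α * (t - s)))) := by ring
      _ ≤ |σ| * ((8 / (α ^ 3 * (H + 1/2)) + 2 ^ (3/2 - H) / α) * (t - s) ^ (H - 3/2)) +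
          |σ| / (1/2 - H) * (Nat.factorial 1 / α ^ 1 * (t - s) ^ (H - 3/2)) := by
        gcongr
        exact integral_farMajorant_le hH₀ hα hu
      _ = _ := by norm_num; field_simp

end Marchaud

theorem stmt6 (H α σ : ℝ) (hH : H ∈ Set.Ioo (0:ℝ) (1/2)) (hα : 0 < α) (hσ : σ ≠ 0) :
    ∃ C : ℝ, 0 < C ∧ ∀ φ ψ : ℝ → ℝ, Measurable φ → Measurable ψ →
      (∀ v : ℝ, φ v ∈ Set.Icc (-α⁻¹) (-α)) → (∀ v : ℝ, ψ v ∈ Set.Icc (-α⁻¹) (-α)) →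
      ∀ t : ℝ, 1 ≤ t →
      (∫⁻ s in Set.Iic (0:ℝ), ENNReal.ofReal
          (|marchaud H (PhiT σ φ t) s| * |marchaud H (PhiT σ ψ 0) s|))
        ≤ ENNReal.ofReal (C * t ^ (H - 3/2)) := by
  obtain ⟨hH₀, hH₁⟩ := hH
  have hH' : H ∈ Ioo (-1/2 : ℝ) (1/2) := ⟨by linarith, hH₁⟩
  have h₁ : 0 < H + 1/2 := by linarith
  have h₂ : 0 < 1/2 - H := by linarith
  have hσ' : 0 < |σ| := abs_pos.2 hσ
  set Kn := 1 / (α * (H + 1/2)) + 1 / (1/2 - H)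
  set Kf := 8 / (α ^ 3 * (H + 1/2)) + 2 ^ (3/2 - H) / α + 1 / (α * (1/2 - H))
  refine ⟨|σ| * Kf * (|σ| * Kn / (H + 1/2) + |σ| * Kf / (1/2 - H)), by positivity,
    fun φ ψ hφm hψm hφ hψ t ht => ?_⟩
  have hGt (s : ℝ) (hs : s < 0) : |marchaud H (PhiT σ φ t) s| ≤ |σ| * Kf * t ^ (H - 3/2) :=
    (abs_marchaud_PhiT_le_far hH' hα hφm hφ (by linarith)).trans <| mul_le_mul_of_nonneg_left
      (rpow_le_rpow_of_nonpos (by linarith) (by linarith) (by linarith)) (by positivity)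
  have hG0 (s : ℝ) (hs : s < 0) : |marchaud H (PhiT σ ψ 0) s| ≤
      if -s ≤ 1 then |σ| * Kn * (-s) ^ (H - 1/2) else |σ| * Kf * (-s) ^ (H - 3/2) := by
    split_ifs with h
    · simpa only [zero_sub] using
        abs_marchaud_PhiT_le_near (σ := σ) hH' hα.le hψm hψ hs (by rwa [zero_sub])
    · simpa only [zero_sub] using abs_marchaud_PhiT_le_far (σ := σ) hH' hα hψm hψ hs
  refine (setLIntegral_Iic_ofReal_abs_mul_abs_le (by linarith) (by linarith) (by positivity)
    (by positivity) (by positivity) hGt hG0).trans_eq ?_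
  congr 1
  ring
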